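/- For every atomic proposition a ∈ AP, infinite word w : ℕ → Set AP, position i ∈ ℕ and valuation v : Var → ℕ: (w,i,v) ⊨ ¬a ∧ ○(¬a U_{=x} a) if and only if (w,i,v) ⊨ ○(¬a U_{≤x} a) ∧ (¬a U_{>x} a). In words, the exact-bound until is expressible by a combination of ◇_{≤x}-type and □_{≤x}-type modalities. -/
import Mathlib


/-- Syntax of pLTL with the parametrized until operators U_{≤x}, U_{>x}, U_{=x} as primitives:
φ ::= a | ¬φ | φ∧φ | ○φ | φU_{≤x}φ | φU_{>x}φ | φU_{=x}φ. -/
inductive PLTL (AP Var : Type) : Type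
  | atom : AP → PLTL AP Var
  | not : PLTL AP Var → PLTL AP Var
  | and : PLTL AP Var → PLTL AP Var → PLTL AP Var
  | next : PLTL AP Var → PLTL AP Var
  | untilLe : Var → PLTL AP Var → PLTL AP Var → PLTL AP Var
  | untilGt : Var → PLTL AP Var → PLTL AP Var → PLTL AP Var
  | untilEq : Var → PLTL AP Var → PLTL AP Var → PLTL AP Var

/-- Satisfaction relation `(w,i,v) ⊨ φ`. -/
def PLTL.Sat {AP Var : Type} (w : ℕ → Set AP) : ℕ → (Var → ℕ) → PLTL AP Var → Prop
  | i, _, atom a => a ∈ w i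
  | i, v, not φ => ¬ PLTL.Sat w i v φ
  | i, v, and φ ψ => PLTL.Sat w i v φ ∧ PLTL.Sat w i v ψ
  | i, v, next φ => PLTL.Sat w (i + 1) v φ
  | i, v, untilLe x φ ψ =>
      ∃ j, i ≤ j ∧ j ≤ v x + i ∧ PLTL.Sat w j v ψ ∧
        ∀ k, i ≤ k → k < j → PLTL.Sat w k v φ
  | i, v, untilGt x φ ψ =>
      ∃ j, v x + i < j ∧ PLTL.Sat w j v ψ ∧ ∀ k, i ≤ k → k < j → PLTL.Sat w k v φ
  | i, v, untilEq x φ ψ =>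
      PLTL.Sat w (v x + i) v ψ ∧ ∀ k, i ≤ k → k < v x + i → PLTL.Sat w k v φ

/-- ¬a ∧ ○(¬a U_{=x} a)  ≡  ○(¬a U_{≤x} a) ∧ (¬a U_{>x} a). -/
theorem pLTL_untilEq_encoding {AP Var : Type} (a : AP) (w : ℕ → Set AP)
    (i : ℕ) (v : Var → ℕ) (x : Var) :
    PLTL.Sat w i v
        (PLTL.and (PLTL.not (PLTL.atom a))
          (PLTL.next (PLTL.untilEq x (PLTL.not (PLTL.atom a)) (PLTL.atom a)))) ↔
      PLTL.Sat w i v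
        (PLTL.and (PLTL.next (PLTL.untilLe x (PLTL.not (PLTL.atom a)) (PLTL.atom a)))
          (PLTL.untilGt x (PLTL.not (PLTL.atom a)) (PLTL.atom a))) := by
  simp only [PLTL.Sat]
  constructor
  · rintro ⟨hi, hend, hmid⟩
    refine ⟨⟨v x + (i+1), le_add_self, le_refl _, hend, fun k hk1 hk2 => hmid k hk1 hk2⟩,
      v x + (i+1), by omega, hend, fun k hk1 hk2 => ?_⟩
    rcases eq_or_lt_of_le hk1 with rfl | h
    · exact hi
    · exact hmid k h (by omega)
  · rintro ⟨⟨j, hj1, hj2, hja, hjk⟩, m, hm1, hma, hmk⟩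
    have hjm : j = v x + (i + 1) := by
      by_contra hne
      exact hmk j (by omega) (by omega) hja
    subst hjm
    exact ⟨hmk i le_rfl (by omega), hja, fun k hk1 hk2 => hmk k (by omega) (by omega)⟩
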